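/- arXiv:gr-qc/0007021 — 2 statements merged into one kernel-verified Lean document; each statement's English description precedes it below -/
import Mathlib

section
/- Let n ≥ 1 and let g : ℝ → ℝ be differentiable with g(r) ≥ 0 and 0 ≤ g'(r) < 2 for all r ≥ 0, and with g(r) = r for all r ≥ 1. Then for every x ∈ ℝⁿ with x ≠ 0, writing r = ‖x‖, and for every v ∈ ℝⁿ with v ≠ 0, one has (2r·g'(r)/(2+g(r))²)·(⟨x,v⟩/r)² − (2/(2+g(r)))·‖v‖² < 0. -/
open scoped InnerProductSpace

/-- The pure-gauge perturbation opens out the light cones everywhere: for the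
profile `g` (differentiable, `g ≥ 0`, `0 ≤ g' < 2` on `[0,∞)`, `g r = r` for
`r ≥ 1`), every `x ≠ 0` with `r = ‖x‖`, and every `v ≠ 0`,
`(2 r g'(r)/(2+g r)²)(⟪x,v⟫/r)² − (2/(2+g r))‖v‖² < 0`. -/
theorem gauge_perturbation_opens_light_cones (n : ℕ) (hn : 1 ≤ n) (g : ℝ → ℝ)
    (hdiff : Differentiable ℝ g)
    (hnonneg : ∀ r : ℝ, 0 ≤ r → 0 ≤ g r)
    (hderiv_nonneg : ∀ r : ℝ, 0 ≤ r → 0 ≤ deriv g r)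
    (hderiv_lt : ∀ r : ℝ, 0 ≤ r → deriv g r < 2)
    (hlin : ∀ r : ℝ, 1 ≤ r → g r = r) :
    ∀ x : EuclideanSpace ℝ (Fin n), x ≠ 0 →
      ∀ v : EuclideanSpace ℝ (Fin n), v ≠ 0 →
        (2 * ‖x‖ * deriv g ‖x‖ / (2 + g ‖x‖) ^ 2) * (⟪x, v⟫_ℝ / ‖x‖) ^ 2
          - (2 / (2 + g ‖x‖)) * ‖v‖ ^ 2 < 0 := by
  intro x hx v hv
  set r := ‖x‖ with hrdef
  have hr : 0 < r := by simpa [hrdef] using norm_pos_iff.mpr hx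
  set D := deriv g r with hDdef
  set G := g r with hGdef
  have hG : 0 ≤ G := hnonneg r hr.le
  have hD0 : 0 ≤ D := hderiv_nonneg r hr.le
  have hD2 : D < 2 := hderiv_lt r hr.le
  have hP : (0:ℝ) < 2 + G := by linarith
  have hvp : (0:ℝ) < ‖v‖ := norm_pos_iff.mpr hv
  have hv2 : (0:ℝ) < ‖v‖ ^ 2 := by positivity
  -- key: r * D < 2 + G
  have hkey : r * D < 2 + G := by
    rcases le_or_gt r 1 with h1 | h1
    · rcases eq_or_lt_of_le hD0 with hD | hD
      · rw [← hD]; simpa using hP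
      · have : r * D < 1 * 2 := by
          apply mul_lt_mul' h1 hD2 hD0 one_pos
        nlinarith
    · -- for r > 1, deriv g r = 1
      have hDe : D = 1 := by
        have hev : g =ᶠ[nhds r] (fun y => y) := by
          filter_upwards [eventually_gt_nhds h1] with y hy
          exact hlin y hy.le
        have := hev.deriv_eq
        simp only [hDdef, this]
        simp [deriv_id']
      have hGe : G = r := hlin r h1.le
      rw [hDe, hGe]; linarith
  -- Cauchy–Schwarz
  have hCS : (⟪x, v⟫_ℝ / r) ^ 2 ≤ ‖v‖ ^ 2 := by
    rw [div_pow, div_le_iff₀ (by positivity)]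
    have := abs_real_inner_le_norm x v
    calc ⟪x, v⟫_ℝ ^ 2 = |⟪x, v⟫_ℝ| ^ 2 := by rw [sq_abs]
      _ ≤ (r * ‖v‖) ^ 2 := by
          apply pow_le_pow_left₀ (abs_nonneg _)
          simpa [hrdef, mul_comm] using this
      _ = ‖v‖ ^ 2 * r ^ 2 := by ring
  have h2 : 2 * r * D / (2 + G) ^ 2 < 2 / (2 + G) := by
    rw [div_lt_div_iff₀ (by positivity) hP]
    nlinarith
  have hstep : (2 * r * D / (2 + G) ^ 2) * (⟪x, v⟫_ℝ / r) ^ 2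
      < (2 / (2 + G)) * ‖v‖ ^ 2 :=
    calc (2 * r * D / (2 + G) ^ 2) * (⟪x, v⟫_ℝ / r) ^ 2
        ≤ (2 * r * D / (2 + G) ^ 2) * ‖v‖ ^ 2 := by
          apply mul_le_mul_of_nonneg_left hCS (by positivity)
      _ < (2 / (2 + G)) * ‖v‖ ^ 2 := by
          exact mul_lt_mul_of_pos_right h2 hv2
  linarith
end

section
/- Let X be a topological space, x₀ ∈ X, and 0 < a < λ₀ < b. Let G : X × [0,b] → ℝ satisfy: (i) G is jointly continuous on X × [0,b]; (ii) the partial derivative ∂G/∂λ exists at every point of X × (0,b) and is jointly continuous there; (iii) for every x ∈ X, the function λ ↦ G(x,λ) is concave on every closed subinterval of (0,b) on which it is nonnegative; (iv) G(x,λ) > 0 for all x ∈ X and all λ ∈ (0,a]; (v) G(x₀,λ) > 0 for all λ ∈ (0,λ₀) and G(x₀,λ₀) = 0. Then for every δ > 0 with a < λ₀ − δ and λ₀ + δ < b, there exists an open neighborhood O of x₀ such that for every x ∈ O there exists λ*(x) ∈ (λ₀ − δ, λ₀ + δ) with G(x, λ*(x)) = 0 and G(x,λ) > 0 for all λ ∈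 (0, λ*(x)). In particular, the first positive zero of G(x,·) exists for x near x₀ and depends continuously on x at x₀. -/
/-!
Concavity of `G x₀` on the stretch where it is nonnegative means that after its zero at `λ₀`
it cannot stay nonnegative, so `G x₀ s < 0` for some `s` just beyond `λ₀`. By compactness of
`[a, λ₀ - δ]` and joint continuity, every `G x` with `x` near `x₀` is still positive on
`(0, λ₀ - δ]` and negative at `s`; its first zero after `λ₀ - δ` then lies in `(λ₀ - δ, s)`.
-/

open Set Filter Topology

theorem exists_neg_of_concaveOn_of_eq_zero {g : ℝ → ℝ} {m c b : ℝ} (hm : 0 < m)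
    (hmc : m < c) (hcb : c < b)
    (hconc : ∀ s t : ℝ, 0 < s → t < b → (∀ l ∈ Icc s t, 0 ≤ g l) → ConcaveOn ℝ (Icc s t) g)
    (hpos : ∀ l ∈ Ioo 0 m, 0 < g l) (hzero : g m = 0) :
    ∃ l ∈ Ioc m c, g l < 0 := by
  by_contra! hnonneg
  have hm2 : m / 2 < m := half_lt_self hm
  have hg_nonneg : ∀ l ∈ Icc (m / 2) c, 0 ≤ g l := by
    intro l ⟨hl₁, hl₂⟩
    rcases lt_trichotomy l m with hlm | rfl | hlm
    · exact (hpos l ⟨by linarith, hlm⟩).le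
    · exact hzero.ge
    · exact hnonneg l ⟨hlm, hl₂⟩
  have hgc : g c < g m :=
    (hconc _ _ (half_pos hm) hcb hg_nonneg).lt_right_of_left_lt
      (left_mem_Icc.2 (by linarith)) (right_mem_Icc.2 (by linarith))
      (by rw [openSegment_eq_Ioo (by linarith)]; exact ⟨hm2, hmc⟩)
      (by rw [hzero]; exact hpos _ ⟨half_pos hm, hm2⟩)
  linarith [hnonneg c ⟨hmc, le_rfl⟩]

theorem exists_first_zero_of_pos_of_neg {g : ℝ → ℝ} {p s : ℝ} (hps : p ≤ s)
    (hg : ContinuousOn g (Icc p s)) (hp : 0 < g p) (hs : g s < 0) :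
    ∃ lam ∈ Ioo p s, g lam = 0 ∧ ∀ l ∈ Ico p lam, 0 < g l := by
  set S := Icc p s ∩ g ⁻¹' Iic 0
  have hS_bdd : BddBelow S := ⟨p, fun l hl => hl.1.1⟩
  have hS_ne : S.Nonempty := ⟨s, ⟨hps, le_rfl⟩, hs.le⟩
  obtain ⟨⟨hp_le, hle_s⟩, hg_le⟩ : sInf S ∈ S :=
    (hg.preimage_isClosed_of_isClosed isClosed_Icc isClosed_Iic).csInf_mem hS_ne hS_bdd
  have hbefore : ∀ l ∈ Ico p (sInf S), 0 < g l := fun l ⟨hpl, hl⟩ =>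
    not_le.1 fun hgl => (csInf_le hS_bdd ⟨⟨hpl, hl.le.trans hle_s⟩, hgl⟩).not_gt hl
  have hp_lt : p < sInf S := hp_le.lt_of_ne fun h => (h ▸ hp).not_ge hg_le
  have hzero : g (sInf S) = 0 := by
    refine hg_le.antisymm (not_lt.1 fun hneg => ?_)
    obtain ⟨z, hz, hgz⟩ := intermediate_value_Ioo' hp_le
      (hg.mono (Icc_subset_Icc le_rfl hle_s)) ⟨hneg, hp⟩
    exact (hbefore z ⟨hz.1.le, hz.2⟩).ne' hgz
  exact ⟨sInf S, ⟨hp_lt, hle_s.lt_of_ne fun h => (h ▸ hs).ne hzero⟩, hzero, hbefore⟩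

theorem eventually_forall_pos_of_isCompact {X Y : Type*} [TopologicalSpace X]
    [TopologicalSpace Y] {f : X → Y → ℝ} {x₀ : X} {K : Set Y} (hK : IsCompact K)
    (hf : ∀ y ∈ K, ContinuousAt (fun p : X × Y => f p.1 p.2) (x₀, y))
    (hpos : ∀ y ∈ K, 0 < f x₀ y) :
    ∀ᶠ x in 𝓝 x₀, ∀ y ∈ K, 0 < f x y :=
  hK.eventually_forall_of_forall_eventually fun y hy =>
    (hf y hy).eventually (lt_mem_nhds (hpos y hy))

theorem first_zero_continuous_general {X : Type*} [TopologicalSpace X] (x0 : X)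
    (a lam0 b : ℝ) (ha : 0 < a)
    (G : X → ℝ → ℝ)
    (hcont : ContinuousOn (fun p : X × ℝ => G p.1 p.2)
      (Set.univ ×ˢ Set.Icc 0 b))
    (hconc : ∀ x : X, ∀ s t : ℝ, 0 < s → t < b →
      (∀ l ∈ Set.Icc s t, 0 ≤ G x l) → ConcaveOn ℝ (Set.Icc s t) (G x))
    (hpos_a : ∀ x : X, ∀ l ∈ Set.Ioc (0 : ℝ) a, 0 < G x l)
    (hpos0 : ∀ l ∈ Set.Ioo (0 : ℝ) lam0, 0 < G x0 l)
    (hzero0 : G x0 lam0 = 0) :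
    ∀ δ : ℝ, 0 < δ → a < lam0 - δ → lam0 + δ < b →
      ∃ O : Set X, IsOpen O ∧ x0 ∈ O ∧
        ∀ x ∈ O, ∃ lam : ℝ, lam ∈ Set.Ioo (lam0 - δ) (lam0 + δ) ∧
          G x lam = 0 ∧ ∀ l ∈ Set.Ioo 0 lam, 0 < G x l := by
  intro δ hδ haδ hδb
  have hGat : ∀ x, ∀ l ∈ Ioo 0 b, ContinuousAt (fun p : X × ℝ => G p.1 p.2) (x, l) :=
    fun x l hl => hcont.continuousAt (prod_mem_nhds univ_mem (Icc_mem_nhds hl.1 hl.2))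
  have hslice : ∀ x, ContinuousOn (G x) (Icc 0 b) := fun x =>
    hcont.comp (continuous_const.prodMk continuous_id).continuousOn fun _ hl => ⟨trivial, hl⟩
  obtain ⟨s, ⟨hlam0s, hs⟩, hGs⟩ := exists_neg_of_concaveOn_of_eq_zero (by linarith)
    (by linarith : lam0 < lam0 + δ / 2) (by linarith) (hconc x0) hpos0 hzero0
  have hGs_at : ContinuousAt (fun x => G x s) x0 :=
    (hGat x0 s ⟨by linarith, by linarith⟩).comp (f := fun x => (x, s))
      (continuousAt_id.prodMk continuousAt_const)
  have hnear : ∀ᶠ x in 𝓝 x0, (∀ l ∈ Icc a (lam0 - δ), 0 < G x l) ∧ G x s < 0 :=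
    (eventually_forall_pos_of_isCompact isCompact_Icc
      (fun l hl => hGat x0 l ⟨by linarith [hl.1], by linarith [hl.2]⟩)
      (fun l hl => hpos0 l ⟨by linarith [hl.1], by linarith [hl.2]⟩)).and
    (hGs_at.eventually (gt_mem_nhds hGs))
  obtain ⟨O, hO, hO_open, hx0O⟩ := mem_nhds_iff.1 hnear
  refine ⟨O, hO_open, hx0O, fun x hx => ?_⟩
  obtain ⟨hposK, hGxs⟩ := hO hx
  obtain ⟨lam, ⟨hδlam, hlams⟩, hzero, hbefore⟩ := exists_first_zero_of_pos_of_neg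
    (by linarith) ((hslice x).mono (Icc_subset_Icc (by linarith) (by linarith)))
    (hposK _ ⟨haδ.le, le_rfl⟩) hGxs
  refine ⟨lam, ⟨hδlam, by linarith⟩, hzero, fun l ⟨hl0, hl⟩ => ?_⟩
  rcases le_or_gt l a with hla | hal
  · exact hpos_a x l ⟨hl0, hla⟩
  rcases le_or_gt l (lam0 - δ) with hlδ | hδl
  · exact hposK l ⟨hal.le, hlδ⟩
  · exact hbefore l ⟨hδl.le, hl⟩

/-- Analytic core of Lemma 1: continuity of the first positive zero (first
conjugate point) under perturbation of parameters. Here `G : X → ℝ → ℝ` is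
jointly continuous on `X × [0,b]`, has jointly continuous partial
`λ`-derivative on `X × (0,b)`, is concave in `λ` on each closed subinterval of
`(0,b)` where it is nonnegative, is positive on `(0,a]` for every parameter,
and `G x₀` is positive on `(0,λ₀)` with `G x₀ λ₀ = 0` where `0 < a < λ₀ < b`.
Then for every small `δ > 0` there is a neighborhood `O` of `x₀` such that for
each `x ∈ O` the function `G x` has its first positive zero in
`(λ₀ − δ, λ₀ + δ)`. -/
theorem first_zero_continuous {X : Type*} [TopologicalSpace X] (x0 : X)
    (a lam0 b : ℝ) (ha : 0 < a) (halam : a < lam0) (hlamb : lam0 < b)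
    (G : X → ℝ → ℝ)
    (hcont : ContinuousOn (fun p : X × ℝ => G p.1 p.2)
      (Set.univ ×ˢ Set.Icc 0 b))
    (hdiff : ∀ x : X, ∀ l ∈ Set.Ioo (0 : ℝ) b, DifferentiableAt ℝ (G x) l)
    (hderiv_cont : ContinuousOn (fun p : X × ℝ => deriv (G p.1) p.2)
      (Set.univ ×ˢ Set.Ioo 0 b))
    (hconc : ∀ x : X, ∀ s t : ℝ, 0 < s → t < b →
      (∀ l ∈ Set.Icc s t, 0 ≤ G x l) → ConcaveOn ℝ (Set.Icc s t) (G x))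
    (hpos_a : ∀ x : X, ∀ l ∈ Set.Ioc (0 : ℝ) a, 0 < G x l)
    (hpos0 : ∀ l ∈ Set.Ioo (0 : ℝ) lam0, 0 < G x0 l)
    (hzero0 : G x0 lam0 = 0) :
    ∀ δ : ℝ, 0 < δ → a < lam0 - δ → lam0 + δ < b →
      ∃ O : Set X, IsOpen O ∧ x0 ∈ O ∧
        ∀ x ∈ O, ∃ lam : ℝ, lam ∈ Set.Ioo (lam0 - δ) (lam0 + δ) ∧
          G x lam = 0 ∧ ∀ l ∈ Set.Ioo 0 lam, 0 < G x l :=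
  first_zero_continuous_general x0 a lam0 b ha G hcont hconc hpos_a hpos0 hzero0
end
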